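/- Let g be a standard Gaussian random variable and c > 0, τ ≥ 0. Then E[((|c·g| - τ)⁺)²] = 2(c² + τ²)·Q(τ/c) - √(2/π)·c·τ·exp(-τ²/(2c²)), where Q(x) = (1/√(2π)) ∫_x^∞ e^{-t²/2} dt. -/

import Mathlib

open MeasureTheory Real

noncomputable def Qtail (x : ℝ) : ℝ := (1 / Real.sqrt (2 * π)) * ∫ t in Set.Ioi x, Real.exp (-t ^ 2 / 2)

/-!
With `a = τ / c` we have `(|c g| - τ)⁺ = c (|g| - a)⁺`, so by symmetry of the Gaussian density
the expectation is `2 c² / √(2π)` times `∫_a^∞ (x - a)² e^{-x²/2} dx`. Since `-(x - 2a) e^{-x²/2}`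
is an antiderivative of `((x - a)² - (1 + a²)) e^{-x²/2}` vanishing at infinity, this integral
equals `(1 + a²) ∫_a^∞ e^{-x²/2} dx - a e^{-a²/2}`.
-/

open Set Filter Polynomial ProbabilityTheory

theorem integrable_eval_mul_exp_neg_sq_div_two (p : ℝ[X]) :
    Integrable fun x : ℝ => p.eval x * exp (-x ^ 2 / 2) := by
  induction p using Polynomial.induction_on' with
  | add p q hp hq => exact (hp.add hq).congr (ae_of_all _ fun x => by simp [add_mul])
  | monomial n a =>
    refine ((integrable_rpow_mul_exp_neg_mul_sq (b := 1 / 2) one_half_pos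
      (s := n) (by linarith [n.cast_nonneg (α := ℝ)])).const_mul a).congr
      (ae_of_all _ fun x => ?_)
    simp only [eval_monomial, rpow_natCast]
    ring_nf

theorem hasDerivAt_exp_neg_sq_div_two (x : ℝ) :
    HasDerivAt (fun y => exp (-y ^ 2 / 2)) (-x * exp (-x ^ 2 / 2)) x := by
  have h : HasDerivAt (fun y : ℝ => -y ^ 2 / 2) (-x) x :=
    ((hasDerivAt_pow 2 x).fun_neg.div_const 2).congr_deriv (by ring)
  simpa [mul_comm] using h.exp

theorem integral_Ioi_eq_neg_of_hasDerivAt_of_integrableOn {f f' : ℝ → ℝ} {a : ℝ}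
    (hderiv : ∀ x ∈ Ici a, HasDerivAt f (f' x) x) (f'int : IntegrableOn f' (Ioi a))
    (fint : IntegrableOn f (Ioi a)) :
    ∫ x in Ioi a, f' x = -f a := by
  rw [integral_Ioi_of_hasDerivAt_of_tendsto' hderiv f'int
    (tendsto_zero_of_hasDerivAt_of_integrableOn_Ioi (fun x hx => hderiv x (mem_Ici_of_Ioi hx))
      f'int fint), zero_sub]

theorem integral_Ioi_sub_sq_mul_exp_neg_sq_div_two (a : ℝ) :
    ∫ x in Ioi a, (x - a) ^ 2 * exp (-x ^ 2 / 2) =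
      (1 + a ^ 2) * (∫ x in Ioi a, exp (-x ^ 2 / 2)) - a * exp (-a ^ 2 / 2) := by
  have hpoly (p : ℝ[X]) (f : ℝ → ℝ) (hf : ∀ x, p.eval x = f x) :
      IntegrableOn (fun x => f x * exp (-x ^ 2 / 2)) (Ioi a) :=
    ((integrable_eval_mul_exp_neg_sq_div_two p).congr
      (ae_of_all _ fun x => by simp only [hf])).integrableOn
  have hderiv (x : ℝ) (_ : x ∈ Ici a) : HasDerivAt (fun y => -(y - 2 * a) * exp (-y ^ 2 / 2))
      (((x - a) ^ 2 - (1 + a ^ 2)) * exp (-x ^ 2 / 2)) x :=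
    (((hasDerivAt_id x).sub_const (2 * a)).fun_neg.mul
      (hasDerivAt_exp_neg_sq_div_two x)).congr_deriv (by simp only [id]; ring)
  have hsq : IntegrableOn (fun x => ((x - a) ^ 2 - (1 + a ^ 2)) * exp (-x ^ 2 / 2)) (Ioi a) :=
    hpoly ((X - C a) ^ 2 - C (1 + a ^ 2)) _ fun x => by simp
  have hFTC := integral_Ioi_eq_neg_of_hasDerivAt_of_integrableOn hderiv hsq
    (hpoly (-(X - C (2 * a))) _ fun x => by simp)
  calc ∫ x in Ioi a, (x - a) ^ 2 * exp (-x ^ 2 / 2)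
      = ∫ x in Ioi a, (((x - a) ^ 2 - (1 + a ^ 2)) * exp (-x ^ 2 / 2)
          + (1 + a ^ 2) * exp (-x ^ 2 / 2)) := by
        congr 1; ext x; ring
    _ = (1 + a ^ 2) * (∫ x in Ioi a, exp (-x ^ 2 / 2)) - a * exp (-a ^ 2 / 2) := by
        rw [integral_add hsq (hpoly (C (1 + a ^ 2)) _ fun x => by simp), integral_const_mul, hFTC]
        ring

theorem setIntegral_Ioi_max_sub_sq_mul {g : ℝ → ℝ} {a b : ℝ} (hab : a ≤ b) :
    ∫ x in Ioi a, max (x - b) 0 ^ 2 * g x = ∫ x in Ioi b, (x - b) ^ 2 * g x := by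
  rw [setIntegral_eq_of_subset_of_forall_sdiff_eq_zero measurableSet_Ioi (Ioi_subset_Ioi hab)
    fun x hx => by rw [max_eq_right (sub_nonpos.2 (not_lt.1 hx.2)), sq, zero_mul, zero_mul]]
  exact setIntegral_congr_fun measurableSet_Ioi fun x hx => by
    rw [max_eq_left (sub_nonneg.2 (le_of_lt hx))]

theorem integral_max_abs_sub_sq_mul_exp_neg_sq_div_two {a : ℝ} (ha : 0 ≤ a) :
    ∫ x, exp (-x ^ 2 / 2) * max (|x| - a) 0 ^ 2 =
      2 * ((1 + a ^ 2) * (∫ x in Ioi a, exp (-x ^ 2 / 2)) - a * exp (-a ^ 2 / 2)) := by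
  have heven (x : ℝ) : exp (-x ^ 2 / 2) * max (|x| - a) 0 ^ 2 =
      max (|x| - a) 0 ^ 2 * exp (-|x| ^ 2 / 2) := by
    rw [sq_abs, mul_comm]
  simp_rw [heven]
  rw [integral_comp_abs (f := fun y => max (y - a) 0 ^ 2 * exp (-y ^ 2 / 2)),
    setIntegral_Ioi_max_sub_sq_mul ha, integral_Ioi_sub_sq_mul_exp_neg_sq_div_two]

theorem integral_gaussianReal_zero_one (f : ℝ → ℝ) :
    ∫ x, f x ∂gaussianReal 0 1 = (√(2 * π))⁻¹ * ∫ x, exp (-x ^ 2 / 2) * f x := by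
  rw [integral_gaussianReal_eq_integral_smul one_ne_zero, ← integral_const_mul]
  congr 1; ext x
  simp [gaussianPDFReal, mul_assoc]

theorem rho_formula (c τ : ℝ) (hc : 0 < c) (hτ : 0 ≤ τ) :
    (∫ g, (max (|c * g| - τ) 0) ^ 2 ∂(ProbabilityTheory.gaussianReal 0 1)) =
      2 * (c ^ 2 + τ ^ 2) * Qtail (τ / c) -
        Real.sqrt (2 / π) * c * τ * Real.exp (-τ ^ 2 / (2 * c ^ 2)) := by
  have hscale (x : ℝ) : max (|c * x| - τ) 0 ^ 2 = c ^ 2 * max (|x| - τ / c) 0 ^ 2 := by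
    rw [abs_mul, abs_of_pos hc, ← mul_pow, mul_max_of_nonneg _ _ hc.le, mul_zero, mul_sub,
      mul_div_cancel₀ _ hc.ne']
  have hsqrt : √(2 / π) = 2 * (√(2 * π))⁻¹ := by
    rw [show (2 : ℝ) / π = 2 ^ 2 / (2 * π) by ring, sqrt_div' _ (by positivity),
      sqrt_sq zero_le_two, div_eq_mul_inv]
  have hexp : -(τ / c) ^ 2 / 2 = -τ ^ 2 / (2 * c ^ 2) := by field_simp
  simp_rw [integral_gaussianReal_zero_one, hscale, mul_left_comm _ (c ^ 2), integral_const_mul,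
    integral_max_abs_sub_sq_mul_exp_neg_sq_div_two (div_nonneg hτ hc.le), Qtail, hsqrt, hexp]
  field_simp
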